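/- arXiv:2404.16676 — 2 statements merged into one kernel-verified Lean document; each statement's English description precedes it below -/
import Mathlib

section
/- Let (X,d) be a metric space, let x_1,...,x_L ∈ X, let F ⊆ X, and let x* ∈ F minimize max_{ℓ} d(x, x_ℓ) over x ∈ F. Let x_closest be a point among x_1,...,x_L minimizing d(·, x*), and suppose x' ∈ F satisfies d(x', x_closest) ≤ α · d(x*, x_closest) for some α ≥ 0. Then for every ℓ ∈ [L], d(x', x_ℓ) ≤ (α+2) · d(x*, x_ℓ). -/
theorem stmt_0 {X : Type*} [MetricSpace X] {L : ℕ} (hL : 0 < L)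
    (xs : Fin L → X) (F : Set X) (hF : F.Nonempty) (α : ℝ) (hα : 0 ≤ α)
    (xstar : X) (hxstarF : xstar ∈ F)
    (hopt : ∀ y ∈ F,
      Finset.univ.sup' ⟨⟨0, hL⟩, Finset.mem_univ _⟩ (fun ℓ => dist xstar (xs ℓ)) ≤
      Finset.univ.sup' ⟨⟨0, hL⟩, Finset.mem_univ _⟩ (fun ℓ => dist y (xs ℓ)))
    (ℓ₀ : Fin L) (hclosest : ∀ ℓ, dist (xs ℓ₀) xstar ≤ dist (xs ℓ) xstar)
    (x' : X) (hx'F : x' ∈ F)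
    (hx' : dist x' (xs ℓ₀) ≤ α * dist xstar (xs ℓ₀)) :
    ∀ ℓ, dist x' (xs ℓ) ≤ (α + 2) * dist xstar (xs ℓ) := by
  intro ℓ
  have h0 : dist xstar (xs ℓ₀) ≤ dist xstar (xs ℓ) := by
    simpa [dist_comm] using hclosest ℓ
  have h1 : dist x' (xs ℓ) ≤ dist x' (xs ℓ₀) + dist (xs ℓ₀) xstar + dist xstar (xs ℓ) :=
    dist_triangle4 _ _ _ _
  have h2 : dist (xs ℓ₀) xstar = dist xstar (xs ℓ₀) := dist_comm _ _
  nlinarith [dist_nonneg (x := xstar) (y := xs ℓ₀)]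
end

section
/- Let x : E → [0,1] on a finite index set E = pairs of a linearly ordered finite set, with the pseudometric structure: for a fixed center i and elements j < k (ordered by distance from i, i.e., x(i,j) ≤ x(i,k)), the triangle inequality gives x(j,k) ≥ x(i,k) - x(i,j) and 1 - x(j,k) ≥ 1 - x(i,k) - x(i,j). Then for any weights w⁺(j,k), w⁻(j,k) ≥ 0 with w⁺+w⁻=1 and fixed k: ∑_{j<k} ( w⁺(j,k)·x(j,k) + w⁻(j,k)·(1-x(j,k)) ) ≥ p_k·x(i,k) + n_k·(1 - x(i,k)) - ∑_{j<k} x(i,j), where p_k = ∑_{j<k} w⁺(j,k) and n_k = ∑_{j<k} w⁻(j,k). -/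
theorem stmt_18 {V : Type*} [Fintype V] [LinearOrder V]
    (x : V → V → ℝ) (hrange : ∀ u v, x u v ∈ Set.Icc (0 : ℝ) 1)
    (hdiag : ∀ u, x u u = 0) (hsymm : ∀ u v, x u v = x v u)
    (htri : ∀ u v w, x u w ≤ x u v + x v w)
    (i k : V) (hord : ∀ j, j < k → x i j ≤ x i k)
    (wp wm : V → V → ℝ)
    (hwp : ∀ u v, wp u v ∈ Set.Icc (0 : ℝ) 1)
    (hwm : ∀ u v, wm u v ∈ Set.Icc (0 : ℝ) 1)
    (hprob : ∀ j, j < k → wp j k + wm j k = 1) :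
    (∑ j ∈ Finset.univ.filter (· < k), wp j k) * x i k
      + (∑ j ∈ Finset.univ.filter (· < k), wm j k) * (1 - x i k)
      - ∑ j ∈ Finset.univ.filter (· < k), x i j
    ≤ ∑ j ∈ Finset.univ.filter (· < k), (wp j k * x j k + wm j k * (1 - x j k)) := by
  rw [Finset.sum_mul, Finset.sum_mul, ← Finset.sum_add_distrib, ← Finset.sum_sub_distrib]
  refine Finset.sum_le_sum fun j hj => ?_
  simp only [Finset.mem_filter] at hj
  have hjk := hj.2
  have h1 : x i k ≤ x i j + x j k := htri i j k
  have h2 : x j k ≤ x j i + x i k := htri j i k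
  have hsy : x j i = x i j := hsymm j i
  have hp := (hwp j k).1
  have hm := (hwm j k).1
  have hpr := hprob j hjk
  nlinarith [hp, hm, h1, h2]
end
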